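/- Suppose J(v,p,t) = α(t)·(v−p)² + γ(t) satisfies, for all (v,p), the HJB equation 0 = ∂ₜJ + sup_θ {(v−p)·θ + λ_t·θ·∂ₚJ} + (1/2)·λ_t²·s²·∂ₚ²J with interior optimum (finite supremum), where s² = σ_u² + σ_ε² > 0 and λ_t > 0. Then the first-order condition forces ∂ₚJ = −(v−p)/λ_t, hence α(t)·λ_t = 1/2, and matching the coefficient of (v−p)² yields α'(t) = 0; consequently α and λ are constant in t. -/
import Mathlib


theorem stmt_16 (α γ lam : ℝ → ℝ) (s2 : ℝ) (hs2 : 0 < s2)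
    (hlam : ∀ t, 0 < lam t)
    (hα : Differentiable ℝ α) (hγ : Differentiable ℝ γ)
    (J : ℝ → ℝ → ℝ → ℝ)
    (hJ : ∀ v p t, J v p t = α t * (v - p) ^ 2 + γ t)
    (hbdd : ∀ v p t, BddAbove (Set.range fun θ : ℝ =>
      (v - p) * θ + lam t * θ * deriv (fun p' => J v p' t) p))
    (hHJB : ∀ v p t,
      0 = deriv (fun t' => J v p t') t
        + sSup (Set.range fun θ : ℝ =>
            (v - p) * θ + lam t * θ * deriv (fun p' => J v p' t) p)
        + (1 / 2) * lam t ^ 2 * s2 * deriv (deriv (fun p' => J v p' t)) p) :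
    (∀ v p t, deriv (fun p' => J v p' t) p = -(v - p) / lam t) ∧
    (∀ t, α t * lam t = 1 / 2) ∧
    (∀ t, deriv α t = 0) ∧
    (∃ a l : ℝ, (∀ t, α t = a) ∧ (∀ t, lam t = l)) := by
  have hDp : ∀ v p t, deriv (fun p' => J v p' t) p = -(2 * α t * (v - p)) := by
    intro v p t
    have hfe : (fun p' => J v p' t) = fun p' => α t * (v - p') ^ 2 + γ t :=
      funext fun p' => hJ v p' t
    rw [hfe]
    have h : HasDerivAt (fun p' : ℝ => α t * (v - p') ^ 2 + γ t)
        (α t * ((2 : ℕ) * (v - p) ^ (2 - 1) * (0 - 1)) + 0) p :=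
      ((((hasDerivAt_const p v).sub (hasDerivAt_id p)).pow 2).const_mul (α t)).add
        (hasDerivAt_const p (γ t))
    rw [h.deriv]; push_cast; ring
  have hc : ∀ v p t, (v - p) + lam t * deriv (fun p' => J v p' t) p = 0 := by
    intro v p t
    have hb := hbdd v p t
    set c := (v - p) + lam t * deriv (fun p' => J v p' t) p with hcdef
    have hfe : (fun θ : ℝ => (v - p) * θ + lam t * θ * deriv (fun p' => J v p' t) p)
        = fun θ => c * θ := by
      funext θ; rw [hcdef]; ring
    rw [hfe] at hb
    by_contra hne
    obtain ⟨M, hM⟩ := hb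
    have h1 : c * ((M + |M| + 1) / c) ≤ M := hM ⟨_, rfl⟩
    rw [mul_div_cancel₀ _ hne] at h1
    have := abs_nonneg M
    linarith
  have hαlam : ∀ t, α t * lam t = 1 / 2 := by
    intro t
    have h := hc 1 0 t
    rw [hDp] at h
    linear_combination (-(1 / 2 : ℝ)) * h
  have hsup : ∀ v p t, sSup (Set.range fun θ : ℝ =>
      (v - p) * θ + lam t * θ * deriv (fun p' => J v p' t) p) = 0 := by
    intro v p t
    have hfe : (fun θ : ℝ => (v - p) * θ + lam t * θ * deriv (fun p' => J v p' t) p)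
        = fun _ => (0 : ℝ) := by
      funext θ
      linear_combination θ * hc v p t
    rw [hfe, Set.range_const, csSup_singleton]
  have hDpp : ∀ v p t, deriv (deriv (fun p' => J v p' t)) p = 2 * α t := by
    intro v p t
    have hfe : deriv (fun p' => J v p' t) = fun p' => -(2 * α t * (v - p')) :=
      funext fun p' => hDp v p' t
    rw [hfe]
    have h : HasDerivAt (fun p' : ℝ => -(2 * α t * (v - p'))) (-(2 * α t * (0 - 1))) p :=
      ((((hasDerivAt_const p v).sub (hasDerivAt_id p)).const_mul (2 * α t))).neg
    rw [h.deriv]; ring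
  have hDt : ∀ v p t, deriv (fun t' => J v p t') t = deriv α t * (v - p) ^ 2 + deriv γ t := by
    intro v p t
    have hfe : (fun t' => J v p t') = fun t' => α t' * (v - p) ^ 2 + γ t' :=
      funext fun t' => hJ v p t'
    rw [hfe]
    have h : HasDerivAt (fun t' => α t' * (v - p) ^ 2 + γ t')
        (deriv α t * (v - p) ^ 2 + deriv γ t) t :=
      (((hα t).hasDerivAt.mul_const _)).add (hγ t).hasDerivAt
    rw [h.deriv]
  have hα' : ∀ t, deriv α t = 0 := by
    intro t
    have h1 := hHJB 0 0 t
    have h2 := hHJB 1 0 t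
    rw [hDt, hDpp, hsup] at h1 h2
    linear_combination h1 - h2
  have hconst := is_const_of_deriv_eq_zero hα hα'
  have hα0 : α 0 ≠ 0 := by
    intro h0
    have := hαlam 0
    rw [h0] at this
    norm_num at this
  refine ⟨?_, hαlam, hα', ⟨α 0, lam 0, fun t => hconst t 0, fun t => ?_⟩⟩
  · intro v p t
    rw [hDp, eq_div_iff (hlam t).ne']
    linear_combination (-2 * (v - p)) * hαlam t
  · have h1 := hαlam t
    have h2 := hαlam 0
    have h3 := hconst t 0
    rw [h3] at h1
    have : α 0 * lam t = α 0 * lam 0 := by rw [h1, h2]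
    exact mul_left_cancel₀ hα0 this
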